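/- arXiv:0805.1872 — 3 statements merged into one kernel-verified Lean document; each statement's English description precedes it below -/
import Mathlib

section
/- Let f_n be the number of permutations of length n avoiding a contiguous pattern σ, and g_n the number avoiding k-σ, where k is greater than all letters of σ. Then g_0 = 1 and g_{n+1} = Σ_{i=0}^{n} C(n,i) g_i f_{n-i} for all n ≥ 0. -/
/-- `l` is a permutation of `{1, …, n}`. -/
def IsPermOf (n : ℕ) (l : List ℕ) : Prop :=
  l.Perm ((List.range n).map (· + 1))

/-- The word `w` forms the partially ordered pattern `σ`. -/
def FormsPOP (σ w : List ℕ) : Prop :=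
  w.length = σ.length ∧
  ∀ i j, i < σ.length → j < σ.length →
    σ.getD i 0 < σ.getD j 0 → w.getD i 0 < w.getD j 0

/-- `π` contains an occurrence of the contiguous pattern `σ`. -/
def OccursContig (σ π : List ℕ) : Prop :=
  ∃ A w B, π = A ++ w ++ B ∧ FormsPOP σ w

/-- occurrence of `k-σ`: a large element to the left of a consecutive occurrence of `σ`. -/
def OccursKS (σ π : List ℕ) : Prop :=
  ∃ A x B w C, π = A ++ x :: (B ++ w ++ C) ∧ FormsPOP σ w ∧ ∀ y ∈ w, y < x

/-!
Split a permutation of `{1, …, n+1}` at its maximal letter, `π = A ++ (n+1) :: B`. If the large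
letter of an occurrence of `k-σ` in `π` lies left of `n+1`, the occurrence of `σ` cannot use `n+1`,
so it lies inside `A` or inside `B`; otherwise it lies inside `B`. Conversely `n+1` serves as the
large letter for every occurrence of `σ` in `B`. Hence `π` avoids `k-σ` iff `A` avoids `k-σ` and `B`
avoids `σ`. Both conditions only see the relative order of the letters, so the number of choices
for `A` and `B` depends only on the size `i` of the letter set of `A`, which ranges over the
`C(n, i)` subsets of `{1, …, n}` of size `i`.
-/

open Finset

variable {α : Type*}

def arrangements (s : Finset α) : Finset (List α) :=
  ⟨s.val.lists, Multiset.lists_nodup_finset s⟩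

theorem mem_arrangements {s : Finset α} {l : List α} :
    l ∈ arrangements s ↔ (l : Multiset α) = s.val := by
  simp [arrangements, eq_comm]

theorem mem_iff_of_mem_arrangements {s : Finset α} {l : List α} (hl : l ∈ arrangements s)
    (a : α) : a ∈ l ↔ a ∈ s := by
  rw [← Finset.mem_val, ← mem_arrangements.1 hl, Multiset.mem_coe]

theorem arrangements_empty : arrangements (∅ : Finset α) = {[]} := by
  ext l
  simp [mem_arrangements]

theorem Set.BijOn.map_mem_arrangements {β : Type*} {s : Finset α} {t : Finset β} {φ : α → β}
    (hφ : Set.BijOn φ s t) {l : List α} (hl : l ∈ arrangements s) :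
    l.map φ ∈ arrangements t := by
  have hnodup : l.Nodup := by
    simpa [← mem_arrangements.1 hl] using s.nodup
  have hmem := mem_iff_of_mem_arrangements hl
  rw [mem_arrangements, Multiset.Nodup.ext ?_ t.nodup]
  · intro b
    simp only [Multiset.mem_coe, List.mem_map, hmem, Finset.mem_val]
    exact Set.ext_iff.1 hφ.image_eq b
  · exact Multiset.coe_nodup.2
      (hnodup.map_on fun a ha b hb => hφ.injOn ((hmem a).1 ha) ((hmem b).1 hb))

theorem List.IsInfix.infix_or_infix_of_notMem {w A B : List α} {M : α}
    (h : w <:+: A ++ M :: B) (hM : M ∉ w) : w <:+: A ∨ w <:+: B := by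
  have prefix_nil : ∀ {l : List α}, l <+: M :: B → M ∉ l → l = [] := by
    rintro (_ | ⟨a, l⟩) hl hMl
    · rfl
    · exact absurd ((List.cons_prefix_cons.1 hl).1 ▸ List.mem_cons_self) hMl
  rcases List.infix_append_iff.1 h with h | h | ⟨l₁, l₂, rfl, h₁, h₂⟩
  · exact Or.inl h
  · rcases List.infix_cons_iff.1 h with h | h
    · exact Or.inr (prefix_nil h hM ▸ List.nil_infix)
    · exact Or.inr h
  · rw [prefix_nil h₂ fun h => hM (List.mem_append_right _ h), List.append_nil]
    exact Or.inl h₁.isInfix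

section Relabel

variable [LinearOrder α] {s t : Finset α}

def relabel (e : s ≃o t) (a : α) : α :=
  if ha : a ∈ s then e ⟨a, ha⟩ else a

theorem relabel_of_mem (e : s ≃o t) {a : α} (ha : a ∈ s) : relabel e a = e ⟨a, ha⟩ :=
  dif_pos ha

theorem relabel_strictMonoOn (e : s ≃o t) : StrictMonoOn (relabel e) s := fun a ha b hb hab => by
  rw [relabel_of_mem e ha, relabel_of_mem e hb, Subtype.coe_lt_coe, e.lt_iff_lt]
  exact hab

theorem relabel_mapsTo (e : s ≃o t) : Set.MapsTo (relabel e) s t := fun a ha => by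
  rw [relabel_of_mem e ha]
  exact (e _).2

theorem relabel_leftInvOn (e : s ≃o t) : Set.LeftInvOn (relabel e.symm) (relabel e) s :=
  fun a ha => by rw [relabel_of_mem e ha, relabel_of_mem e.symm (e _).2, e.symm_apply_apply]

theorem relabel_bijOn (e : s ≃o t) : Set.BijOn (relabel e) s t :=
  Set.InvOn.bijOn ⟨relabel_leftInvOn e, relabel_leftInvOn e.symm⟩ (relabel_mapsTo e)
    (relabel_mapsTo e.symm)

theorem card_filter_arrangements_eq_of_card_eq (h : #s = #t) {P : List α → Prop}
    [DecidablePred P] (hP : ∀ l φ, StrictMonoOn φ {a | a ∈ l} → (P (l.map φ) ↔ P l)) :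
    #{l ∈ arrangements s | P l} = #{l ∈ arrangements t | P l} := by
  have maps_to : ∀ {s t : Finset α} (e : s ≃o t) l, l ∈ {l ∈ arrangements s | P l} →
      l.map (relabel e) ∈ {l ∈ arrangements t | P l} := by
    simp only [mem_filter]
    rintro s t e l ⟨hl, hPl⟩
    refine ⟨(relabel_bijOn e).map_mem_arrangements hl, (hP l _ ?_).2 hPl⟩
    exact (relabel_strictMonoOn e).mono fun a ha => (mem_iff_of_mem_arrangements hl a).1 ha
  have left_inv : ∀ {s t : Finset α} (e : s ≃o t) l, l ∈ {l ∈ arrangements s | P l} →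
      (l.map (relabel e)).map (relabel e.symm) = l := by
    intro s t e l hl
    rw [List.map_map]
    conv_rhs => rw [← List.map_id l]
    exact List.map_congr_left fun a ha =>
      relabel_leftInvOn e ((mem_iff_of_mem_arrangements (mem_filter.1 hl).1 a).1 ha)
  let e : s ≃o t := (s.orderIsoOfFin h).symm.trans (t.orderIsoOfFin rfl)
  exact card_nbij' _ _ (maps_to e) (maps_to e.symm) (left_inv e) (left_inv e.symm)

end Relabel

section Insert

variable [DecidableEq α] {M : α} {T : Finset α}

theorem append_cons_mem_arrangements_insert (hM : M ∉ T) {S : Finset α} (hST : S ⊆ T)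
    {A B : List α} (hA : A ∈ arrangements S) (hB : B ∈ arrangements (T \ S)) :
    A ++ M :: B ∈ arrangements (insert M T) := by
  rw [mem_arrangements] at hA hB ⊢
  rw [insert_val_of_notMem hM, ← Multiset.coe_add, ← Multiset.cons_coe, hA, hB,
    Multiset.add_cons, sdiff_val, add_tsub_cancel_of_le (val_le_iff.2 hST)]

theorem exists_append_cons_of_mem_arrangements_insert (hM : M ∉ T) {π : List α}
    (hπ : π ∈ arrangements (insert M T)) :
    ∃ A B, π = A ++ M :: B ∧ A.toFinset ⊆ T ∧ A ∈ arrangements A.toFinset ∧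
      B ∈ arrangements (T \ A.toFinset) := by
  obtain ⟨A, B, rfl⟩ :=
    List.append_of_mem ((mem_iff_of_mem_arrangements hπ M).2 (mem_insert_self M T))
  have hAB : (A + B : Multiset α) = T.val := by
    rw [mem_arrangements, insert_val_of_notMem hM, ← Multiset.coe_add, ← Multiset.cons_coe,
      Multiset.add_cons, Multiset.cons_inj_right] at hπ
    exact hπ
  have hA : A.Nodup :=
    Multiset.coe_nodup.1 (Multiset.nodup_of_le (Multiset.le_add_right _ _) (hAB ▸ T.nodup))
  have hAval : A.toFinset.val = A := by rw [List.toFinset_val, hA.dedup]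
  refine ⟨A, B, rfl, val_le_iff.1 ?_, mem_arrangements.2 hAval.symm, mem_arrangements.2 ?_⟩
  · rw [hAval, ← hAB]
    exact Multiset.le_add_right _ _
  · rw [sdiff_val, hAval, ← hAB, add_tsub_cancel_left]

theorem card_filter_arrangements_insert (hM : M ∉ T) {P Q R : List α → Prop} [DecidablePred P]
    [DecidablePred Q] [DecidablePred R]
    (hPQR : ∀ A B, (∀ a ∈ A, a ∈ T) → (∀ b ∈ B, b ∈ T) → (P (A ++ M :: B) ↔ Q A ∧ R B)) :
    #{π ∈ arrangements (insert M T) | P π} =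
      ∑ S ∈ T.powerset, #{A ∈ arrangements S | Q A} * #{B ∈ arrangements (T \ S) | R B} := by
  set F : Finset α → Finset (List α × List α) := fun S =>
    {A ∈ arrangements S | Q A} ×ˢ {B ∈ arrangements (T \ S) | R B}
  have mem_F : ∀ p, p ∈ T.powerset.biUnion F ↔ ∃ S ⊆ T, (p.1 ∈ arrangements S ∧ Q p.1) ∧
      (p.2 ∈ arrangements (T \ S) ∧ R p.2) := by
    simp only [F, mem_biUnion, mem_powerset, mem_product, mem_filter, implies_true]
  have subset_T : ∀ {S A B}, S ⊆ T → A ∈ arrangements S → B ∈ arrangements (T \ S) →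
      (∀ a ∈ A, a ∈ T) ∧ (∀ b ∈ B, b ∈ T) := fun hST hA hB =>
    ⟨fun a ha => hST ((mem_iff_of_mem_arrangements hA a).1 ha),
      fun b hb => (mem_sdiff.1 ((mem_iff_of_mem_arrangements hB b).1 hb)).1⟩
  have hdisj : (T.powerset : Set (Finset α)).PairwiseDisjoint F := by
    intro S _ S' _ hSS'
    simp only [Function.onFun, disjoint_left, F, mem_product, mem_filter]
    rintro ⟨A, B⟩ ⟨⟨hA, -⟩, -⟩ ⟨⟨hA', -⟩, -⟩
    exact hSS' (val_injective ((mem_arrangements.1 hA).symm.trans (mem_arrangements.1 hA')))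
  simp_rw [← card_product]
  rw [← card_biUnion hdisj]
  refine (card_bij (fun p _ => p.1 ++ M :: p.2) ?_ ?_ ?_).symm
  · rintro ⟨A, B⟩ hp
    obtain ⟨S, hST, ⟨hA, hQ⟩, hB, hR⟩ := (mem_F _).1 hp
    obtain ⟨hAT, hBT⟩ := subset_T hST hA hB
    exact mem_filter.2 ⟨append_cons_mem_arrangements_insert hM hST hA hB,
      (hPQR A B hAT hBT).2 ⟨hQ, hR⟩⟩
  · rintro ⟨A, B⟩ hp ⟨A', B'⟩ - h
    obtain ⟨S, hST, ⟨hA, -⟩, hB, -⟩ := (mem_F _).1 hp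
    obtain ⟨hAT, hBT⟩ := subset_T hST hA hB
    obtain ⟨rfl, -, rfl⟩ := (List.append_cons_inj_of_notMem (fun h => hM (hAT M h))
      (fun h => hM (hBT M h))).1 h
    rfl
  · intro π hπ
    obtain ⟨hπ, hP⟩ := mem_filter.1 hπ
    obtain ⟨A, B, rfl, hAT, hA, hB⟩ := exists_append_cons_of_mem_arrangements_insert hM hπ
    obtain ⟨hAT', hBT⟩ := subset_T hAT hA hB
    exact ⟨(A, B), (mem_F _).2 ⟨_, hAT, ⟨hA, ((hPQR A B hAT' hBT).1 hP).1⟩, hB,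
      ((hPQR A B hAT' hBT).1 hP).2⟩, rfl⟩

end Insert

section Patterns

variable {σ : List ℕ}

theorem formsPOP_map_iff {w : List ℕ} {φ : ℕ → ℕ} (hφ : StrictMonoOn φ {a | a ∈ w}) :
    FormsPOP σ (w.map φ) ↔ FormsPOP σ w := by
  simp only [FormsPOP, List.length_map]
  refine and_congr_right fun hlen => forall₄_congr fun i j hi hj => imp_congr_right fun _ => ?_
  rw [List.getD_eq_getElem _ _ (by simpa [hlen]), List.getD_eq_getElem _ _ (by simpa [hlen]),
    List.getD_eq_getElem _ _ (by simpa [hlen]), List.getD_eq_getElem _ _ (by simpa [hlen]),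
    List.getElem_map, List.getElem_map, hφ.lt_iff_lt (List.getElem_mem _) (List.getElem_mem _)]

theorem occursContig_iff_exists_infix {π : List ℕ} :
    OccursContig σ π ↔ ∃ w, w <:+: π ∧ FormsPOP σ w := by
  constructor
  · rintro ⟨A, w, B, rfl, hw⟩
    exact ⟨w, ⟨A, B, rfl⟩, hw⟩
  · rintro ⟨w, ⟨A, B, rfl⟩, hw⟩
    exact ⟨A, w, B, rfl, hw⟩

def OccursBelow (σ π : List ℕ) (x : ℕ) : Prop :=
  ∃ w, w <:+: π ∧ FormsPOP σ w ∧ ∀ y ∈ w, y < x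

theorem OccursBelow.occursContig {π : List ℕ} {x : ℕ} (h : OccursBelow σ π x) :
    OccursContig σ π :=
  let ⟨w, hw, hσw, _⟩ := h
  occursContig_iff_exists_infix.2 ⟨w, hw, hσw⟩

theorem occursBelow_iff_occursContig {π : List ℕ} {x : ℕ} (hπ : ∀ y ∈ π, y < x) :
    OccursBelow σ π x ↔ OccursContig σ π := by
  refine ⟨OccursBelow.occursContig, fun h => ?_⟩
  obtain ⟨w, hw, hσw⟩ := occursContig_iff_exists_infix.1 h
  exact ⟨w, hw, hσw, fun y hy => hπ y (hw.subset hy)⟩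

theorem occursBelow_append_cons_iff {A B : List ℕ} {x M : ℕ} (hxM : x ≤ M) :
    OccursBelow σ (A ++ M :: B) x ↔ OccursBelow σ A x ∨ OccursBelow σ B x := by
  constructor
  · rintro ⟨w, hw, hσw, hwx⟩
    have hM : M ∉ w := fun hMw => (hwx M hMw).not_ge hxM
    rcases hw.infix_or_infix_of_notMem hM with hw | hw
    exacts [Or.inl ⟨w, hw, hσw, hwx⟩, Or.inr ⟨w, hw, hσw, hwx⟩]
  · rintro (⟨w, hw, hσw, hwx⟩ | ⟨w, hw, hσw, hwx⟩)
    · exact ⟨w, List.infix_append_of_infix_left hw, hσw, hwx⟩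
    · exact ⟨w, List.infix_append_of_infix_right (List.infix_cons hw), hσw, hwx⟩

theorem occursBelow_map_iff {π : List ℕ} {x : ℕ} {φ : ℕ → ℕ}
    (hφ : StrictMonoOn φ {a | a ∈ x :: π}) :
    OccursBelow σ (π.map φ) (φ x) ↔ OccursBelow σ π x := by
  have hmono : ∀ {w}, w <:+: π → StrictMonoOn φ {a | a ∈ w} := fun hw =>
    hφ.mono fun a ha => List.mem_cons_of_mem _ (hw.subset ha)
  have hlt : ∀ {w}, w <:+: π → ∀ y ∈ w, (φ y < φ x ↔ y < x) := fun hw y hy =>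
    hφ.lt_iff_lt (List.mem_cons_of_mem _ (hw.subset hy)) List.mem_cons_self
  constructor
  · rintro ⟨_, hw', hσw, hwx⟩
    obtain ⟨w, hw, rfl⟩ := List.infix_map_iff.1 hw'
    refine ⟨w, hw, (formsPOP_map_iff (hmono hw)).1 hσw, fun y hy => ?_⟩
    exact (hlt hw y hy).1 (hwx _ (List.mem_map_of_mem hy))
  · rintro ⟨w, hw, hσw, hwx⟩
    refine ⟨w.map φ, hw.map φ, (formsPOP_map_iff (hmono hw)).2 hσw, ?_⟩
    simp only [List.mem_map, forall_exists_index, and_imp, forall_apply_eq_imp_iff₂]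
    exact fun y hy => (hlt hw y hy).2 (hwx y hy)

theorem not_occursKS_nil : ¬ OccursKS σ [] := by
  rintro ⟨A, x, B, w, C, h, -⟩
  simp at h

theorem occursKS_cons_iff {π : List ℕ} {x : ℕ} :
    OccursKS σ (x :: π) ↔ OccursBelow σ π x ∨ OccursKS σ π := by
  constructor
  · rintro ⟨_ | ⟨a, A⟩, x', B, w, C, h, hσw, hwx⟩ <;> simp only [List.nil_append,
      List.cons_append, List.cons.injEq] at h <;> obtain ⟨rfl, rfl⟩ := h
    · exact Or.inl ⟨w, ⟨B, C, rfl⟩, hσw, hwx⟩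
    · exact Or.inr ⟨A, x', B, w, C, rfl, hσw, hwx⟩
  · rintro (⟨w, ⟨B, C, rfl⟩, hσw, hwx⟩ | ⟨A, x', B, w, C, rfl, hσw, hwx⟩)
    · exact ⟨[], x, B, w, C, rfl, hσw, hwx⟩
    · exact ⟨x :: A, x', B, w, C, rfl, hσw, hwx⟩

theorem OccursKS.occursContig {π : List ℕ} (h : OccursKS σ π) : OccursContig σ π := by
  obtain ⟨A, x, B, w, C, rfl, hσw, -⟩ := h
  exact ⟨A ++ x :: B, w, C, by simp, hσw⟩

theorem occursContig_map_iff {π : List ℕ} {φ : ℕ → ℕ} (hφ : StrictMonoOn φ {a | a ∈ π}) :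
    OccursContig σ (π.map φ) ↔ OccursContig σ π := by
  simp only [occursContig_iff_exists_infix, List.infix_map_iff]
  constructor
  · rintro ⟨_, ⟨w, hw, rfl⟩, hσw⟩
    exact ⟨w, hw, (formsPOP_map_iff (hφ.mono fun a ha => hw.subset ha)).1 hσw⟩
  · rintro ⟨w, hw, hσw⟩
    exact ⟨_, ⟨w, hw, rfl⟩, (formsPOP_map_iff (hφ.mono fun a ha => hw.subset ha)).2 hσw⟩

theorem occursKS_map_iff {π : List ℕ} {φ : ℕ → ℕ} (hφ : StrictMonoOn φ {a | a ∈ π}) :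
    OccursKS σ (π.map φ) ↔ OccursKS σ π := by
  induction π with
  | nil => rfl
  | cons x π ih =>
    rw [List.map_cons, occursKS_cons_iff, occursKS_cons_iff, occursBelow_map_iff hφ,
      ih (hφ.mono fun a ha => List.mem_cons_of_mem _ ha)]

theorem occursKS_append_cons_iff {A B : List ℕ} {M : ℕ} (hA : ∀ a ∈ A, a < M)
    (hB : ∀ b ∈ B, b < M) : OccursKS σ (A ++ M :: B) ↔ OccursKS σ A ∨ OccursContig σ B := by
  induction A with
  | nil =>
    rw [List.nil_append, occursKS_cons_iff, occursBelow_iff_occursContig hB]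
    simpa [not_occursKS_nil] using OccursKS.occursContig
  | cons a A ih =>
    rw [List.cons_append, occursKS_cons_iff, occursKS_cons_iff,
      occursBelow_append_cons_iff (hA a List.mem_cons_self).le,
      ih fun x hx => hA x (List.mem_cons_of_mem _ hx)]
    have := @OccursBelow.occursContig σ B a
    tauto

end Patterns

theorem isPermOf_iff_mem_arrangements {n : ℕ} {l : List ℕ} :
    IsPermOf n l ↔ l ∈ arrangements (Icc 1 n) := by
  have hIcc : (Icc 1 n).val = ((List.range n).map (· + 1) : List ℕ) := by
    refine (Multiset.Nodup.ext (Icc 1 n).nodup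
      (Multiset.coe_nodup.2 (List.nodup_range.map (add_left_injective 1)))).2 fun a => ?_
    simp only [mem_val, mem_Icc, Multiset.mem_coe, List.mem_map, List.mem_range]
    exact ⟨fun h => ⟨a - 1, by omega, by omega⟩, by omega⟩
  rw [mem_arrangements, hIcc, Multiset.coe_eq_coe, IsPermOf]

theorem natCard_isPermOf_and (n : ℕ) (P : List ℕ → Prop) [DecidablePred P] :
    Nat.card {l : List ℕ // IsPermOf n l ∧ P l} = #{l ∈ arrangements (Icc 1 n) | P l} := by
  rw [← Nat.card_eq_finsetCard]
  exact Nat.card_congr (Equiv.subtypeEquivRight fun l => by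
    rw [mem_filter, isPermOf_iff_mem_arrangements])

theorem count_avoid_ks_rec_general (σ : List ℕ)
    (f g : ℕ → ℕ)
    (hf : ∀ n, f n = Nat.card {l : List ℕ // IsPermOf n l ∧ ¬ OccursContig σ l})
    (hg : ∀ n, g n = Nat.card {l : List ℕ // IsPermOf n l ∧ ¬ OccursKS σ l}) :
    g 0 = 1 ∧
    ∀ n, g (n + 1) = ∑ i ∈ Finset.range (n + 1), Nat.choose n i * (g i * f (n - i)) := by
  classical
  have hgS (S : Finset ℕ) : #{l ∈ arrangements S | ¬ OccursKS σ l} = g #S := by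
    rw [hg, natCard_isPermOf_and]
    exact card_filter_arrangements_eq_of_card_eq (by simp) fun l φ hφ =>
      not_congr (occursKS_map_iff hφ)
  have hfS (S : Finset ℕ) : #{l ∈ arrangements S | ¬ OccursContig σ l} = f #S := by
    rw [hf, natCard_isPermOf_and]
    exact card_filter_arrangements_eq_of_card_eq (by simp) fun l φ hφ =>
      not_congr (occursContig_map_iff hφ)
  refine ⟨?_, fun n => ?_⟩
  · simpa [arrangements_empty, filter_singleton, not_occursKS_nil] using (hgS ∅).symm
  · have hsplit : ∀ A B, (∀ a ∈ A, a ∈ Icc 1 n) → (∀ b ∈ B, b ∈ Icc 1 n) →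
        (¬ OccursKS σ (A ++ (n + 1) :: B) ↔ ¬ OccursKS σ A ∧ ¬ OccursContig σ B) :=
      fun A B hA hB => by
        rw [occursKS_append_cons_iff (fun a ha => Nat.lt_succ_of_le (mem_Icc.1 (hA a ha)).2)
          (fun b hb => Nat.lt_succ_of_le (mem_Icc.1 (hB b hb)).2), not_or]
    calc g (n + 1) = #{l ∈ arrangements (Icc 1 (n + 1)) | ¬ OccursKS σ l} := by
          rw [hgS, Nat.card_Icc, Nat.add_sub_cancel]
      _ = ∑ S ∈ (Icc 1 n).powerset, g #S * f (n - #S) := by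
          rw [← insert_Icc_right_eq_Icc_add_one (by omega),
            card_filter_arrangements_insert (by simp) hsplit]
          refine sum_congr rfl fun S hS => ?_
          rw [hgS, hfS, card_sdiff_of_subset (mem_powerset.1 hS), Nat.card_Icc, Nat.add_sub_cancel]
      _ = _ := by
          rw [sum_powerset_apply_card (fun m => g m * f (n - m)), Nat.card_Icc, Nat.add_sub_cancel]
          simp only [smul_eq_mul]

/-- If `f n` counts `σ`-avoiders of length `n` and `g n` counts `(k-σ)`-avoiders,
then `g 0 = 1` and `g (n+1) = ∑ C(n,i) gᵢ f_{n-i}`. -/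
theorem count_avoid_ks_rec (σ : List ℕ) (hσ : σ ≠ [])
    (f g : ℕ → ℕ)
    (hf : ∀ n, f n = Nat.card {l : List ℕ // IsPermOf n l ∧ ¬ OccursContig σ l})
    (hg : ∀ n, g n = Nat.card {l : List ℕ // IsPermOf n l ∧ ¬ OccursKS σ l}) :
    g 0 = 1 ∧
    ∀ n, g (n + 1) = ∑ i ∈ Finset.range (n + 1), Nat.choose n i * (g i * f (n - i)) :=
  count_avoid_ks_rec_general σ f g hf hg
end

section
/- A permutation π avoids both the patterns 3-12 and k-(k-1)...21 if and only if π is a concatenation of decreasing sequences, each of length less than k, in which the first element of each decreasing sequence is greater than the first element of the preceding one. Consequently, permutations avoiding both patterns are in bijection with set partitions with all block sizes less than k. -/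
/-- Occurrence of the generalized pattern `3-12` in `π`. -/
def Occ312 (π : List ℕ) : Prop :=
  ∃ i j, i < j ∧ j + 1 < π.length ∧
    π.getD j 0 < π.getD (j + 1) 0 ∧ π.getD (j + 1) 0 < π.getD i 0

/-- The decreasing word `(k-1)(k-2)⋯21`. -/
def decWord (k : ℕ) : List ℕ := ((List.range (k - 1)).reverse).map (· + 1)

/-!
Cut `π` into its maximal decreasing runs. In a permutation the ascents are exactly the
boundaries between consecutive runs, so `π` avoids `3-12` iff every ascent top exceeds all
earlier entries, iff the first letters of the runs increase. In that situation an occurrence of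
`k-(k-1)⋯21` yields a decreasing factor of length `k`: its large letter, or the letter just
before its decreasing factor, extends that factor, since otherwise the latter letter is the
bottom of an ascent whose top lies below the large letter. As a decreasing factor lies inside a
single run, `k-(k-1)⋯21` is therefore avoided iff all runs are shorter than `k`.

A concatenation of decreasing words with increasing first letters is the run decomposition of
the resulting word, so it is determined by the permutation. Reading its words as blocks, and
conversely writing each block decreasingly and ordering the blocks by their maxima, gives the
bijection with set partitions.
-/

open List

theorem List.exists_mem_splitBy_of_infix {α : Type*} {r : α → α → Bool} {u l : List α}
    (hu : u <:+: l) (hne : u ≠ []) (hc : u.IsChain fun x y => r x y) :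
    ∃ p ∈ l.splitBy r, u <:+: p := by
  suffices key : ∀ L : List (List α), [] ∉ L →
      L.IsChain (fun a b => ∃ ha hb, r (a.getLast ha) (b.head hb) = false) →
      u <:+: L.flatten → ∃ p ∈ L, u <:+: p from
    key _ (nil_notMem_splitBy r l) (isChain_getLast_head_splitBy r l) (by rwa [flatten_splitBy])
  intro L
  induction L with
  | nil => exact fun _ _ hu => absurd (eq_nil_of_infix_nil hu) hne
  | cons p L ih =>
    intro hnil hbd hu
    rw [flatten_cons, infix_append_iff_ne_nil] at hu
    rcases hu with hu | hu | ⟨s, t, hs, ht, rfl, hsp, htL⟩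
    · exact ⟨p, mem_cons_self, hu⟩
    · obtain ⟨q, hq, huq⟩ := ih (fun h => hnil (mem_cons_of_mem _ h)) hbd.tail hu
      exact ⟨q, mem_cons_of_mem _ hq, huq⟩
    · -- `u` would straddle two consecutive pieces, whose junction is not an `r`-step
      obtain ⟨q, L, rfl⟩ : ∃ q L', L = q :: L' := by
        cases L with
        | nil => simp [prefix_nil.mp htL] at ht
        | cons q L' => exact ⟨q, L', rfl⟩
      have hrel : r (s.getLast hs) (t.head ht) := by
        simpa [getLast?_eq_some_getLast hs, head?_eq_some_head ht] using
          (isChain_append.mp hc).2.2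
      obtain ⟨_, hq, hbad⟩ := (isChain_cons_cons.mp hbd).1
      rw [hsp.getLast hs, htL.head ht, head_flatten_eq_head_head (l := q :: L) _ hq] at hrel
      simp [hbad] at hrel

theorem List.headD_mem {α : Type*} {p : List α} (d : α) (hp : p ≠ []) : p.headD d ∈ p := by
  obtain ⟨a, p, rfl⟩ := exists_cons_of_ne_nil hp
  exact mem_cons_self

theorem List.le_headD_of_isChain {p : List ℕ} (hp : p.IsChain (· > ·)) {x : ℕ} (hx : x ∈ p) :
    x ≤ p.headD 0 := by
  cases p with
  | nil => simp at hx
  | cons a p =>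
    rcases mem_cons.mp hx with rfl | hx
    · exact le_rfl
    · exact ((pairwise_cons.mp (isChain_iff_pairwise.mp hp)).1 x hx).le

theorem List.ne_of_nodup_of_eq_append_cons_cons {α : Type*} {π U V : List α} {y z : α}
    (hπ : π.Nodup) (h : π = U ++ y :: z :: V) : y ≠ z := by
  subst h
  exact fun hyz => (nodup_cons.mp (nodup_append.mp hπ).2.1).1 (hyz ▸ mem_cons_self)

theorem List.eq_of_mem_of_mem_of_nodup_flatten {α : Type*} {L : List (List α)} (hL : L.flatten.Nodup)
    {p q : List α} (hp : p ∈ L) (hq : q ∈ L) {v : α} (hvp : v ∈ p) (hvq : v ∈ q) : p = q := by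
  by_contra hpq
  have : Std.Symm (α := List α) List.Disjoint := ⟨fun _ _ h => h.symm⟩
  exact (nodup_flatten.mp hL).2.forall hp hq hpq hvp hvq

theorem List.lt_iff_headD_lt {p q : List ℕ} (hp : p ≠ []) (hq : q ≠ []) (h : p.headD 0 ≠ q.headD 0) :
    p < q ↔ p.headD 0 < q.headD 0 := by
  obtain ⟨a, p, rfl⟩ := exists_cons_of_ne_nil hp
  obtain ⟨b, q, rfl⟩ := exists_cons_of_ne_nil hq
  simp only [headD_cons] at h ⊢
  simp [cons_lt_cons_iff, h]

theorem isPermOf_iff {n : ℕ} {l : List ℕ} :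
    IsPermOf n l ↔ l.Nodup ∧ ∀ v, v ∈ l ↔ ∃ x : Fin n, x.1 + 1 = v := by
  have hnd : ((range n).map (· + 1)).Nodup := nodup_range.map fun a b h => by simpa using h
  have hmem : ∀ v, v ∈ (range n).map (· + 1) ↔ ∃ x : Fin n, x.1 + 1 = v := fun v => by
    simp [Fin.exists_iff]
  constructor
  · intro h
    exact ⟨h.nodup_iff.mpr hnd, fun v => h.mem_iff.trans (hmem v)⟩
  · rintro ⟨hl, hl'⟩
    exact (perm_ext_iff_of_nodup hl hnd).mpr fun v => (hl' v).trans (hmem v).symm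

def descRuns (l : List ℕ) : List (List ℕ) := l.splitBy fun a b => decide (b < a)

def IsSortedRunDecomposition (L : List (List ℕ)) : Prop :=
  (∀ p ∈ L, p ≠ [] ∧ p.IsChain (· > ·)) ∧ (L.map (·.headD 0)).SortedLT

theorem flatten_descRuns (l : List ℕ) : (descRuns l).flatten = l := flatten_splitBy _ l

theorem ne_nil_and_isChain_of_mem_descRuns {l p : List ℕ} (hp : p ∈ descRuns l) :
    p ≠ [] ∧ p.IsChain (· > ·) :=
  ⟨ne_nil_of_mem_splitBy hp, by simpa using isChain_of_mem_splitBy hp⟩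

theorem exists_mem_descRuns_headD_eq (a : ℕ) (l : List ℕ) :
    ∃ q ∈ descRuns (a :: l), q.headD 0 = a := by
  have hne : descRuns (a :: l) ≠ [] := splitBy_ne_nil.2 (cons_ne_nil a l)
  refine ⟨_, head_mem hne, ?_⟩
  rw [headD_eq_head?_getD, head?_eq_some_head (ne_nil_of_mem_splitBy (head_mem hne))]
  exact head_head_splitBy _ (cons_ne_nil a l)

theorem IsSortedRunDecomposition.nil_notMem {L : List (List ℕ)}
    (hL : IsSortedRunDecomposition L) : [] ∉ L :=
  fun h => (hL.1 [] h).1 rfl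

theorem IsSortedRunDecomposition.sortedLT {L : List (List ℕ)}
    (hL : IsSortedRunDecomposition L) : L.SortedLT := by
  refine (((isChain_map _).mp hL.2.isChain).imp_of_mem_tail_imp fun p q hp hq hpq => ?_).sortedLT
  exact (lt_iff_headD_lt (hL.1 p hp).1 (hL.1 q (mem_of_mem_tail hq)).1 hpq.ne).mpr hpq

theorem descRuns_flatten {L : List (List ℕ)} (hL : IsSortedRunDecomposition L) :
    descRuns L.flatten = L := by
  refine splitBy_flatten hL.nil_notMem (fun p hp => by simpa using (hL.1 p hp).2) ?_
  refine ((isChain_map _).mp hL.2.isChain).imp_of_mem_tail_imp fun p q hp hq hpq => ?_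
  obtain ⟨hp0, hpc⟩ := hL.1 p hp
  obtain ⟨b, q, rfl⟩ := exists_cons_of_ne_nil (hL.1 q (mem_of_mem_tail hq)).1
  have hlast := le_headD_of_isChain hpc (getLast_mem hp0)
  rw [headD_cons] at hpq
  exact ⟨hp0, cons_ne_nil b q, decide_eq_false (by rw [head_cons]; omega)⟩

def AscentTopsAreRecords (π : List ℕ) : Prop :=
  ∀ U y z V, π = U ++ y :: z :: V → y < z → ∀ x ∈ U, x < z

theorem occ312_iff {π : List ℕ} :
    Occ312 π ↔ ∃ U y z V, π = U ++ y :: z :: V ∧ y < z ∧ ∃ x ∈ U, z < x := by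
  constructor
  · rintro ⟨i, j, hij, hj, hyz, hzx⟩
    refine ⟨π.take j, π[j], π[j + 1], π.drop (j + 2), ?_, ?_, π[i], ?_, ?_⟩
    · rw [← drop_eq_getElem_cons, ← drop_eq_getElem_cons, take_append_drop]
    · rwa [getD_eq_getElem _ _ hj, getD_eq_getElem _ _ (show j < π.length by omega)] at hyz
    · exact mem_iff_getElem.mpr ⟨i, by simp; omega, getElem_take⟩
    · rwa [getD_eq_getElem _ _ hj, getD_eq_getElem _ _ (show i < π.length by omega)] at hzx
  · rintro ⟨U, y, z, V, rfl, hyz, x, hx, hzx⟩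
    obtain ⟨i, hi, rfl⟩ := mem_iff_getElem.mp hx
    refine ⟨i, U.length, hi, by simp, ?_, ?_⟩ <;>
      simp [getElem?_append_left hi, getElem?_eq_getElem hi, hyz, hzx]

theorem not_occ312_iff {π : List ℕ} (hπ : π.Nodup) : ¬Occ312 π ↔ AscentTopsAreRecords π := by
  rw [occ312_iff]
  constructor
  · intro h U y z V hUV hyz x hx
    refine lt_of_le_of_ne (not_lt.mp fun hzx => h ⟨U, y, z, V, hUV, hyz, x, hx, hzx⟩) ?_
    subst hUV
    exact (nodup_append.mp hπ).2.2 x hx z (by simp)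
  · rintro h ⟨U, y, z, V, hUV, hyz, x, hx, hzx⟩
    exact absurd (h U y z V hUV hyz x hx) (not_lt.mpr hzx.le)

theorem AscentTopsAreRecords.of_sortedLT_headD_descRuns {π : List ℕ}
    (h : ((descRuns π).map (·.headD 0)).SortedLT) : AscentTopsAreRecords π := by
  rintro U y z V rfl hyz x hx
  have hsplit : descRuns (U ++ y :: z :: V) = descRuns (U ++ [y]) ++ descRuns (z :: V) := by
    rw [show U ++ y :: z :: V = (U ++ [y]) ++ z :: V by simp]
    exact splitBy_append_cons _ (by simp; omega)
  rw [hsplit, map_append] at h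
  have hheads := (pairwise_append.mp h.pairwise).2.2
  have hxU : x ∈ (descRuns (U ++ [y])).flatten := by rw [flatten_descRuns]; simp [hx]
  obtain ⟨p, hp, hxp⟩ := mem_flatten.mp hxU
  obtain ⟨q, hq, rfl⟩ := exists_mem_descRuns_headD_eq z V
  calc x ≤ p.headD 0 := le_headD_of_isChain (ne_nil_and_isChain_of_mem_descRuns hp).2 hxp
    _ < q.headD 0 := hheads _ (mem_map_of_mem hp) _ (mem_map_of_mem hq)

theorem sortedLT_headD_descRuns {π : List ℕ} (hπ : π.Nodup) (h : AscentTopsAreRecords π) :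
    ((descRuns π).map (·.headD 0)).SortedLT := by
  refine ((isChain_map _).mpr (isChain_iff_forall_rel_of_append_cons_cons.mpr ?_)).sortedLT
  intro p q R₁ R₂ hR
  obtain ⟨hp, hq, hpq⟩ :=
    isChain_iff_forall_rel_of_append_cons_cons.mp (isChain_getLast_head_splitBy _ π) hR
  obtain ⟨z, q, rfl⟩ := exists_cons_of_ne_nil hq
  have hπeq : π = (R₁.flatten ++ p.dropLast) ++ p.getLast hp :: z :: (q ++ R₂.flatten) := by
    rw [← flatten_descRuns π, hR]
    conv_lhs => rw [← dropLast_append_getLast hp]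
    simp
  have hyz : p.getLast hp < z := by
    refine lt_of_le_of_ne ?_ (ne_of_nodup_of_eq_append_cons_cons hπ hπeq)
    have := of_decide_eq_false hpq
    rw [head_cons] at this
    omega
  have hhead : p.headD 0 ∈ p.dropLast ++ [p.getLast hp] := by
    rw [dropLast_append_getLast hp]
    exact headD_mem 0 hp
  rcases mem_append.mp hhead with hhead | hhead
  · exact h _ _ _ _ hπeq hyz _ (mem_append_right _ hhead)
  · rw [mem_singleton.mp hhead]
    exact hyz

theorem forall_length_descRuns_lt_iff {π : List ℕ} {k : ℕ} (hk : 0 < k) :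
    (∀ p ∈ descRuns π, p.length < k) ↔ ∀ u, u <:+: π → u.IsChain (· > ·) → u.length < k := by
  constructor
  · intro h u hu hc
    rcases eq_or_ne u [] with rfl | hne
    · exact hk
    obtain ⟨p, hp, hup⟩ :=
      exists_mem_splitBy_of_infix (r := fun a b => decide (b < a)) hu hne (by simpa using hc)
    exact lt_of_le_of_lt hup.length_le (h p hp)
  · intro h p hp
    exact h p (flatten_descRuns π ▸ infix_of_mem_flatten hp)
      (ne_nil_and_isChain_of_mem_descRuns hp).2

theorem getD_decWord {k i : ℕ} (hi : i < k - 1) : (decWord k).getD i 0 = k - 1 - i := by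
  rw [getD_eq_getElem _ _ (by simpa [decWord] using hi)]
  simp only [decWord, getElem_map, getElem_reverse, getElem_range, length_range]
  omega

theorem formsPOP_decWord_iff {k : ℕ} {w : List ℕ} :
    FormsPOP (decWord k) w ↔ w.length = k - 1 ∧ w.Pairwise (· > ·) := by
  have hlen : (decWord k).length = k - 1 := by simp [decWord]
  rw [FormsPOP, hlen, pairwise_iff_getElem]
  refine and_congr_right fun hw => ⟨fun h i j hi hj hij => ?_, fun h i j hi hj hij => ?_⟩
  · have := h j i (by omega) (by omega)
      (by rw [getD_decWord (by omega), getD_decWord (by omega)]; omega)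
    rwa [getD_eq_getElem _ _ hj, getD_eq_getElem _ _ hi] at this
  · rw [getD_decWord hi, getD_decWord hj] at hij
    rw [getD_eq_getElem _ _ (by omega), getD_eq_getElem _ _ (by omega)]
    exact h j i (by omega) (by omega) (by omega)

theorem not_occursKS_decWord_iff {π : List ℕ} {k : ℕ} (hk : 2 ≤ k) (hπ : π.Nodup)
    (hrec : AscentTopsAreRecords π) :
    ¬OccursKS (decWord k) π ↔ ∀ u, u <:+: π → u.IsChain (· > ·) → u.length < k := by
  constructor
  · intro h u ⟨A, C, hu⟩ hc
    by_contra! hlen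
    obtain ⟨x, u, rfl⟩ := exists_cons_of_ne_nil (ne_nil_of_length_pos (l := u) (by omega))
    have hpw := pairwise_cons.mp (isChain_iff_pairwise.mp hc)
    refine h ⟨A, x, [], u.take (k - 1), u.drop (k - 1) ++ C, ?_, ?_, ?_⟩
    · rw [← hu, nil_append, ← append_assoc, take_append_drop]
      simp
    · rw [formsPOP_decWord_iff]
      exact ⟨by simp at hlen ⊢; omega, hpw.2.sublist (take_sublist _ _)⟩
    · exact fun y hy => hpw.1 y (mem_of_mem_take hy)
  · rintro h ⟨A, x, B, w, C, rfl, hw, hwx⟩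
    obtain ⟨hlen, hdec⟩ := formsPOP_decWord_iff.mp hw
    obtain ⟨w₀, w, rfl⟩ := exists_cons_of_ne_nil (ne_nil_of_length_pos (l := w) (by omega))
    have hw₀x : w₀ < x := hwx w₀ mem_cons_self
    have too_long : ∀ b, b :: w₀ :: w <:+: A ++ x :: (B ++ w₀ :: w ++ C) → w₀ < b → False :=
      fun b hb hbw => by
        have := h _ hb (isChain_cons_cons.mpr ⟨hbw, hdec.isChain⟩)
        simp at this hlen
        omega
    rcases eq_nil_or_concat' B with rfl | ⟨B, b, rfl⟩
    · exact too_long x ⟨A, C, by simp⟩ hw₀x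
    · have hsplit :
          A ++ x :: (B ++ [b] ++ w₀ :: w ++ C) = (A ++ x :: B) ++ b :: w₀ :: (w ++ C) := by
        simp
      rcases lt_or_gt_of_ne (ne_of_nodup_of_eq_append_cons_cons hπ hsplit) with hbw | hbw
      · exact absurd (hrec _ _ _ _ hsplit hbw x (by simp)) (not_lt.mpr hw₀x.le)
      · exact too_long b ⟨A ++ x :: B, C, by simp⟩ hbw

theorem avoids_iff_descRuns {π : List ℕ} {k : ℕ} (hk : 2 ≤ k) (hπ : π.Nodup) :
    ¬Occ312 π ∧ ¬OccursKS (decWord k) π ↔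
      IsSortedRunDecomposition (descRuns π) ∧ ∀ p ∈ descRuns π, p.length < k := by
  rw [not_occ312_iff hπ, forall_length_descRuns_lt_iff (by omega), IsSortedRunDecomposition]
  have hruns := fun p (hp : p ∈ descRuns π) => ne_nil_and_isChain_of_mem_descRuns hp
  constructor
  · rintro ⟨hrec, hks⟩
    exact ⟨⟨hruns, sortedLT_headD_descRuns hπ hrec⟩, (not_occursKS_decWord_iff hk hπ hrec).mp hks⟩
  · rintro ⟨⟨-, hheads⟩, hlen⟩
    have hrec := AscentTopsAreRecords.of_sortedLT_headD_descRuns hheads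
    exact ⟨hrec, (not_occursKS_decWord_iff hk hπ hrec).mpr hlen⟩

theorem avoids_iff_exists_sortedRunDecomposition {π : List ℕ} {k : ℕ} (hk : 2 ≤ k)
    (hπ : π.Nodup) :
    ¬Occ312 π ∧ ¬OccursKS (decWord k) π ↔
      ∃ L, π = L.flatten ∧ IsSortedRunDecomposition L ∧ ∀ p ∈ L, p.length < k := by
  rw [avoids_iff_descRuns hk hπ]
  constructor
  · exact fun h => ⟨descRuns π, (flatten_descRuns π).symm, h⟩
  · rintro ⟨L, rfl, hL, hlen⟩
    rw [descRuns_flatten hL]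
    exact ⟨hL, hlen⟩

theorem exists_sortedRunDecomposition_iff_exists_fin {π : List ℕ} {k : ℕ} :
    (∃ L, π = L.flatten ∧ IsSortedRunDecomposition L ∧ ∀ p ∈ L, p.length < k) ↔
      ∃ (i : ℕ) (D : Fin i → List ℕ), π = (ofFn D).flatten ∧
        (∀ j, D j ≠ [] ∧ (D j).IsChain (· > ·) ∧ (D j).length < k) ∧
        ∀ (j : ℕ) (h : j + 1 < i), (D ⟨j, by omega⟩).headD 0 < (D ⟨j + 1, h⟩).headD 0 := by
  simp only [IsSortedRunDecomposition, sortedLT_iff_isChain, isChain_iff_getElem, length_map,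
    getElem_map]
  constructor
  · rintro ⟨L, rfl, ⟨hruns, hheads⟩, hlen⟩
    refine ⟨L.length, L.get, by rw [ofFn_get], fun j => ?_, fun j hj => hheads j hj⟩
    exact ⟨(hruns _ (get_mem L j)).1, (hruns _ (get_mem L j)).2, hlen _ (get_mem L j)⟩
  · rintro ⟨i, D, rfl, hD, hheads⟩
    refine ⟨ofFn D, rfl, ⟨fun p hp => ?_, fun j hj => ?_⟩, fun p hp => ?_⟩
    · obtain ⟨j, rfl⟩ := mem_ofFn.mp hp
      exact ⟨(hD j).1, (hD j).2.1⟩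
    · simpa using hheads j (by simpa using hj)
    · obtain ⟨j, rfl⟩ := mem_ofFn.mp hp
      exact (hD j).2.2

section Blocks

variable {n : ℕ}

def toBlock (p : List ℕ) : Finset (Fin n) := {x | x.1 + 1 ∈ p}

def blockWord (b : Finset (Fin n)) : List ℕ := (b.image (·.1 + 1)).sort (· ≥ ·)

theorem mem_toBlock {p : List ℕ} {x : Fin n} : x ∈ toBlock p ↔ x.1 + 1 ∈ p := by
  simp [toBlock]

theorem mem_blockWord {b : Finset (Fin n)} {v : ℕ} :
    v ∈ blockWord b ↔ ∃ x ∈ b, x.1 + 1 = v := by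
  simp [blockWord]

theorem sortedGT_blockWord (b : Finset (Fin n)) : (blockWord b).SortedGT :=
  Finset.sortedGT_sort _

theorem length_blockWord (b : Finset (Fin n)) : (blockWord b).length = b.card := by
  rw [blockWord, Finset.length_sort,
    Finset.card_image_of_injective _ fun x y h => Fin.ext (by simpa using h)]

theorem toBlock_blockWord (b : Finset (Fin n)) : toBlock (blockWord b) = b := by
  ext x
  simp [mem_toBlock, mem_blockWord, Fin.val_inj]

theorem blockWord_toBlock {p : List ℕ} (hp : p.SortedGT)
    (hpn : ∀ v ∈ p, ∃ x : Fin n, x.1 + 1 = v) : blockWord (toBlock (n := n) p) = p := by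
  refine (sortedGT_blockWord _).eq_of_mem_iff hp fun v => ⟨fun hv => ?_, fun hv => ?_⟩
  · obtain ⟨x, hx, rfl⟩ := mem_blockWord.mp hv
    exact mem_toBlock.mp hx
  · obtain ⟨x, rfl⟩ := hpn v hv
    exact mem_blockWord.mpr ⟨x, mem_toBlock.mpr hv, rfl⟩

theorem blockWord_toBlock_of_mem {L : List (List ℕ)} (hperm : IsPermOf n L.flatten)
    (hL : IsSortedRunDecomposition L) {p : List ℕ} (hp : p ∈ L) :
    blockWord (toBlock (n := n) p) = p :=
  blockWord_toBlock (hL.1 p hp).2.sortedGT fun v hv =>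
    ((isPermOf_iff.mp hperm).2 v).mp (mem_flatten.mpr ⟨p, hp, hv⟩)

def toFinpartition (L : List (List ℕ)) (hperm : IsPermOf n L.flatten) (hnil : [] ∉ L) :
    Finpartition (Finset.univ : Finset (Fin n)) :=
  .ofExistsUnique (L.map toBlock).toFinset (fun _ _ => Finset.subset_univ _)
    (fun x _ => by
      obtain ⟨p, hp, hxp⟩ := mem_flatten.mp (((isPermOf_iff.mp hperm).2 _).mpr ⟨x, rfl⟩)
      refine ⟨toBlock p, ⟨by simpa using ⟨p, hp, rfl⟩, mem_toBlock.mpr hxp⟩, ?_⟩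
      rintro _ ⟨hqL, hxq⟩
      obtain ⟨q, hq, rfl⟩ := by simpa using hqL
      rw [eq_of_mem_of_mem_of_nodup_flatten (isPermOf_iff.mp hperm).1 hq hp
        (mem_toBlock.mp hxq) hxp])
    (by
      simp only [mem_toFinset, mem_map, not_exists, not_and]
      intro p hp hempty
      obtain ⟨v, hv⟩ := exists_mem_of_ne_nil p fun h => hnil (h ▸ hp)
      obtain ⟨x, rfl⟩ := ((isPermOf_iff.mp hperm).2 v).mp (mem_flatten.mpr ⟨p, hp, hv⟩)
      simpa [hempty] using (mem_toBlock (x := x)).mpr hv)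

theorem mem_parts_toFinpartition {L : List (List ℕ)} {hperm : IsPermOf n L.flatten}
    {hnil : [] ∉ L} {b : Finset (Fin n)} :
    b ∈ (toFinpartition L hperm hnil).parts ↔ ∃ p ∈ L, toBlock p = b := by
  simp [toFinpartition, Finpartition.ofExistsUnique]

/-- Distinct blocks have distinct maxima, so the lexicographic order sorts the block words by
their first letters. -/
def blockWords (P : Finpartition (Finset.univ : Finset (Fin n))) : List (List ℕ) :=
  (P.parts.image blockWord).sort (· ≤ ·)

variable {P : Finpartition (Finset.univ : Finset (Fin n))}

theorem mem_blockWords {q : List ℕ} : q ∈ blockWords P ↔ ∃ b ∈ P.parts, blockWord b = q := by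
  simp [blockWords]

theorem blockWord_ne_nil {b : Finset (Fin n)} (hb : b ∈ P.parts) : blockWord b ≠ [] := by
  rw [← length_pos_iff, length_blockWord]
  exact (P.nonempty_of_mem_parts hb).card_pos

theorem disjoint_blockWord {b c : Finset (Fin n)} (hb : b ∈ P.parts) (hc : c ∈ P.parts)
    (hbc : blockWord b ≠ blockWord c) : (blockWord b).Disjoint (blockWord c) := by
  intro v hvb hvc
  obtain ⟨x, hx, rfl⟩ := mem_blockWord.mp hvb
  obtain ⟨y, hy, hxy⟩ := mem_blockWord.mp hvc
  obtain rfl : y = x := Fin.ext (by omega)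
  exact hbc (by rw [P.eq_of_mem_parts hb hc hx hy])

theorem isSortedRunDecomposition_blockWords : IsSortedRunDecomposition (blockWords P) := by
  have hwords : ∀ q ∈ blockWords P, q ≠ [] ∧ q.IsChain (· > ·) := fun q hq => by
    obtain ⟨b, hb, rfl⟩ := mem_blockWords.mp hq
    exact ⟨blockWord_ne_nil hb, (sortedGT_blockWord b).isChain⟩
  refine ⟨hwords, (isChain_map _).mpr ?_ |>.sortedLT⟩
  refine (Finset.sortedLT_sort _).isChain.imp_of_mem_tail_imp fun p q hp hq hpq => ?_
  have hq := mem_of_mem_tail hq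
  obtain ⟨b, hb, rfl⟩ := mem_blockWords.mp hp
  obtain ⟨c, hc, rfl⟩ := mem_blockWords.mp hq
  have hdisj := disjoint_blockWord hb hc hpq.ne
  refine (lt_iff_headD_lt (hwords _ hp).1 (hwords _ hq).1 fun h => ?_).mp hpq
  exact hdisj (headD_mem 0 (hwords _ hp).1) (h ▸ headD_mem 0 (hwords _ hq).1)

theorem isPermOf_flatten_blockWords : IsPermOf n (blockWords P).flatten := by
  refine isPermOf_iff.mpr ⟨nodup_flatten.mpr ⟨fun q hq => ?_, ?_⟩, fun v => ?_⟩
  · obtain ⟨b, -, rfl⟩ := mem_blockWords.mp hq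
    exact (sortedGT_blockWord b).nodup
  · refine (Finset.sort_nodup _ _).imp_of_mem fun hp hq hpq => ?_
    obtain ⟨b, hb, rfl⟩ := mem_blockWords.mp hp
    obtain ⟨c, hc, rfl⟩ := mem_blockWords.mp hq
    exact disjoint_blockWord hb hc hpq
  · simp only [mem_flatten, mem_blockWords]
    constructor
    · rintro ⟨_, ⟨b, -, rfl⟩, hv⟩
      obtain ⟨x, -, rfl⟩ := mem_blockWord.mp hv
      exact ⟨x, rfl⟩
    · rintro ⟨x, rfl⟩
      obtain ⟨b, hb, hx⟩ := P.exists_mem (Finset.mem_univ x)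
      exact ⟨_, ⟨b, hb, rfl⟩, mem_blockWord.mpr ⟨x, hx, rfl⟩⟩

theorem toFinpartition_blockWords (hperm : IsPermOf n (blockWords P).flatten)
    (hnil : [] ∉ blockWords P) : toFinpartition (blockWords P) hperm hnil = P := by
  ext b
  simp only [mem_parts_toFinpartition, mem_blockWords]
  constructor
  · rintro ⟨_, ⟨c, hc, rfl⟩, rfl⟩
    rwa [toBlock_blockWord]
  · exact fun hb => ⟨_, ⟨b, hb, rfl⟩, toBlock_blockWord b⟩

theorem blockWords_toFinpartition {L : List (List ℕ)} (hperm : IsPermOf n L.flatten)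
    (hL : IsSortedRunDecomposition L) (hnil : [] ∉ L) :
    blockWords (toFinpartition L hperm hnil) = L := by
  refine (Finset.sortedLT_sort _).eq_of_mem_iff hL.sortedLT fun q => ?_
  change q ∈ blockWords _ ↔ q ∈ L
  simp only [mem_blockWords, mem_parts_toFinpartition]
  constructor
  · rintro ⟨_, ⟨p, hp, rfl⟩, rfl⟩
    rwa [blockWord_toBlock_of_mem hperm hL hp]
  · exact fun hq => ⟨_, ⟨q, hq, rfl⟩, blockWord_toBlock_of_mem hperm hL hq⟩

end Blocks

def sortedRunDecompositionEquiv (n : ℕ) :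
    {L : List (List ℕ) // IsPermOf n L.flatten ∧ IsSortedRunDecomposition L} ≃
      Finpartition (Finset.univ : Finset (Fin n)) where
  toFun L := toFinpartition L.1 L.2.1 L.2.2.nil_notMem
  invFun P := ⟨blockWords P, isPermOf_flatten_blockWords, isSortedRunDecomposition_blockWords⟩
  left_inv L := Subtype.ext (blockWords_toFinpartition L.2.1 L.2.2 L.2.2.nil_notMem)
  right_inv _ := toFinpartition_blockWords _ _

theorem forall_card_parts_sortedRunDecompositionEquiv_lt_iff {n k : ℕ}
    (L : {L : List (List ℕ) // IsPermOf n L.flatten ∧ IsSortedRunDecomposition L}) :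
    (∀ b ∈ (sortedRunDecompositionEquiv n L).parts, b.card < k) ↔ ∀ p ∈ L.1, p.length < k := by
  change (∀ b ∈ (toFinpartition L.1 L.2.1 L.2.2.nil_notMem).parts, b.card < k) ↔ _
  simp only [mem_parts_toFinpartition, forall_exists_index, and_imp, forall_apply_eq_imp_iff₂]
  refine forall₂_congr fun p hp => ?_
  rw [← length_blockWord, blockWord_toBlock_of_mem L.2.1 L.2.2 hp]

def avoidersEquivSortedRunDecompositions {k : ℕ} (hk : 2 ≤ k) (n : ℕ) :
    {l : List ℕ // IsPermOf n l ∧ ¬Occ312 l ∧ ¬OccursKS (decWord k) l} ≃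
      {L : {L : List (List ℕ) // IsPermOf n L.flatten ∧ IsSortedRunDecomposition L} //
        ∀ p ∈ L.1, p.length < k} where
  toFun l :=
    have h := (avoids_iff_descRuns hk (isPermOf_iff.mp l.2.1).1).mp l.2.2
    ⟨⟨descRuns l.1, (flatten_descRuns l.1).symm ▸ l.2.1, h.1⟩, h.2⟩
  invFun L := ⟨L.1.1.flatten, L.1.2.1,
    (avoids_iff_descRuns hk (isPermOf_iff.mp L.1.2.1).1).mpr
      (by rw [descRuns_flatten L.1.2.2]; exact ⟨L.1.2.2, L.2⟩)⟩
  left_inv l := Subtype.ext (flatten_descRuns l.1)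
  right_inv L := Subtype.ext (Subtype.ext (descRuns_flatten L.1.2.2))

/-- A permutation avoids `3-12` and `k-(k-1)⋯21` iff it is a concatenation of
decreasing sequences, each of length `< k`, with increasing first elements;
consequently such permutations are in bijection with set partitions of `{1,…,n}`
all of whose blocks have size `< k`. -/
theorem avoid_312_and_kdec (k : ℕ) (hk : 2 ≤ k) (n : ℕ) :
    (∀ π : List ℕ, IsPermOf n π →
      ((¬ Occ312 π ∧ ¬ OccursKS (decWord k) π) ↔
        ∃ (i : ℕ) (D : Fin i → List ℕ),
          π = (List.ofFn D).flatten ∧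
          (∀ j, D j ≠ [] ∧ (D j).Chain' (· > ·) ∧ (D j).length < k) ∧
          (∀ (j : ℕ) (h : j + 1 < i),
            (D ⟨j, by omega⟩).headD 0 < (D ⟨j + 1, h⟩).headD 0))) ∧
    Nonempty ({l : List ℕ // IsPermOf n l ∧ ¬ Occ312 l ∧ ¬ OccursKS (decWord k) l} ≃
      {P : Finpartition (Finset.univ : Finset (Fin n)) // ∀ b ∈ P.parts, b.card < k}) := by
  refine ⟨fun π hπ => ?_, ⟨?_⟩⟩
  · exact (avoids_iff_exists_sortedRunDecomposition hk (isPermOf_iff.mp hπ).1).trans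
      exists_sortedRunDecomposition_iff_exists_fin
  · exact (avoidersEquivSortedRunDecompositions hk n).trans <|
      (sortedRunDecompositionEquiv n).subtypeEquiv fun L =>
        (forall_card_parts_sortedRunDecompositionEquiv_lt_iff L).symm
end

section
/- Avoiding the pattern 2-1-3 is equivalent to avoiding the pattern 2-13: a permutation π = a_1...a_n has indices i < j < l with a_j < a_i < a_l if and only if it has indices i < j with j+1 ≤ n and a_j < a_i < a_{j+1}. -/
theorem IsPermOf.nodup {n : ℕ} {π : List ℕ} (h : IsPermOf n π) : π.Nodup :=
  h.nodup_iff.mpr ((List.nodup_range).map fun _ _ => Nat.succ_inj.mp)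

theorem Nat.exists_le_lt_and_not_succ {p : ℕ → Prop} {j l : ℕ} (hjl : j ≤ l) (hj : p j)
    (hl : ¬ p l) : ∃ k, j ≤ k ∧ k < l ∧ p k ∧ ¬ p (k + 1) := by
  induction l, hjl using Nat.le_induction with
  | base => exact absurd hj hl
  | succ l hjl ih =>
    by_cases hpl : p l
    · exact ⟨l, hjl, l.lt_succ_self, hpl, hl⟩
    · obtain ⟨k, hjk, hkl, hpk, hpk'⟩ := ih hpl
      exact ⟨k, hjk, hkl.trans l.lt_succ_self, hpk, hpk'⟩

theorem List.Nodup.getD_inj {α : Type*} {π : List α} (hπ : π.Nodup) (d : α) {a b : ℕ}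
    (ha : a < π.length) (hb : b < π.length) (h : π.getD a d = π.getD b d) : a = b := by
  rw [List.getD_eq_getElem _ _ ha, List.getD_eq_getElem _ _ hb] at h
  exact (hπ.getElem_inj_iff).mp h

/- Take the last position `k ∈ [j, l)` whose entry is below `π i`; the entry right after it is
then at least `π i`, and distinct from it. -/
theorem List.Nodup.exists_adjacent_213_of_213 {α : Type*} [LinearOrder α] {π : List α}
    (hπ : π.Nodup) (d : α) {i j l : ℕ} (hij : i < j) (hjl : j < l) (hl : l < π.length)
    (hji : π.getD j d < π.getD i d) (hil : π.getD i d < π.getD l d) :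
    ∃ k, i < k ∧ k + 1 < π.length ∧
      π.getD k d < π.getD i d ∧ π.getD i d < π.getD (k + 1) d := by
  obtain ⟨k, hjk, hkl, hki, hik⟩ := Nat.exists_le_lt_and_not_succ (p := (π.getD · d < π.getD i d))
    hjl.le hji (not_lt.mpr hil.le)
  have hne : π.getD (k + 1) d ≠ π.getD i d := fun h =>
    absurd (hπ.getD_inj d (by omega) (by omega) h) (by omega)
  exact ⟨k, by omega, by omega, hki, lt_of_le_of_ne (not_lt.mp hik) hne.symm⟩

/-- Avoiding `2-1-3` is equivalent to avoiding `2-13`: a permutation has indices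
`i < j < l` with `π j < π i < π l` iff it has indices `i < j` with `j+1` a valid
position and `π j < π i < π (j+1)`. -/
theorem avoid_213_iff (n : ℕ) (π : List ℕ) (hperm : IsPermOf n π) :
    (∃ i j l, i < j ∧ j < l ∧ l < π.length ∧
        π.getD j 0 < π.getD i 0 ∧ π.getD i 0 < π.getD l 0) ↔
    (∃ i j, i < j ∧ j + 1 < π.length ∧
        π.getD j 0 < π.getD i 0 ∧ π.getD i 0 < π.getD (j + 1) 0) := by
  constructor
  · rintro ⟨i, j, l, hij, hjl, hl, hji, hil⟩
    exact ⟨i, hperm.nodup.exists_adjacent_213_of_213 0 hij hjl hl hji hil⟩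
  · rintro ⟨i, j, hij, hj, hji, hij'⟩
    exact ⟨i, j, j + 1, hij, j.lt_succ_self, hj, hji, hij'⟩
end
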